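/- arXiv:1706.07832 — 2 statements merged into one kernel-verified Lean document; each statement's English description precedes it below -/
import Mathlib

section
/- Let L be the Laplacian of a connected weighted graph on n nodes with eigenvalues 0 = λ₁ < λ₂ ≤ … ≤ λₙ, let 1 ≤ k ≤ n−2, and let L̂ be an n×n real symmetric positive semidefinite matrix with L̂𝟙 = 0 and rank exactly k. Let φ : (0,∞) → [0,∞) be a continuous decreasing convex function with lim_{λ→∞} φ(λ) = 0. Then limsup_{κ→∞} Σ_{i=2}^{n} φ(λ_i(L + κ L̂)) ≤ Σ_{i=2}^{n−k} φ(λ_i(L)), where λ_i(L + κL̂) denote the eigenvalues of L + κL̂ listed in increasing order. -/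
/-!
For `κ ≥ 0` both `L` and `κ • L̂` lie below `L + κ • L̂` in the Loewner order, so by
Courant–Fischer `λᵢ(L) ≤ λᵢ(L + κ L̂)` and `κ λᵢ(L̂) ≤ λᵢ(L + κ L̂)`. As `φ` is decreasing,
the indices `2 ≤ i ≤ n - k` contribute at most `φ (λᵢ(L))`. The top `k` eigenvalues of the
positive semidefinite rank-`k` matrix `L̂` are positive, so the remaining indices contribute at
most `φ (κ λᵢ(L̂))`, which tends to `0`.
-/

open Filter Finset Matrix

/-- The eigenvalues of a real matrix, listed in increasing order (counted with multiplicity);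
junk value `0` if the matrix is not symmetric. -/
noncomputable def sortedEigenvalues {n : ℕ} (A : Matrix (Fin n) (Fin n) ℝ) : Fin n → ℝ :=
  if hA : A.IsHermitian then hA.eigenvalues ∘ Tuple.sort hA.eigenvalues else fun _ => 0

/-- `L` is the Laplacian matrix of a connected weighted graph: symmetric positive semidefinite,
`L 𝟙 = 0`, and the kernel of `L` is exactly the span of the all-ones vector. -/
def IsConnLaplacian {n : ℕ} (L : Matrix (Fin n) (Fin n) ℝ) : Prop :=
  L.PosSemidef ∧ (L *ᵥ (fun _ => (1 : ℝ)) = 0) ∧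
    ∀ v : Fin n → ℝ, L *ᵥ v = 0 → ∃ c : ℝ, v = fun _ => c

open RealInnerProductSpace

theorem Orthonormal.inner_eq_zero_of_mem_span_image {𝕜 ι E : Type*} [RCLike 𝕜]
    [NormedAddCommGroup E] [InnerProductSpace 𝕜 E] {v : ι → E} (hv : Orthonormal 𝕜 v)
    {s : Set ι} {x : E} (hx : x ∈ Submodule.span 𝕜 (v '' s)) {j : ι} (hj : j ∉ s) :
    inner 𝕜 x (v j) = 0 := by
  obtain ⟨l, hl, rfl⟩ := (Finsupp.mem_span_image_iff_linearCombination 𝕜).1 hx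
  exact hv.inner_finsupp_eq_zero hj hl

theorem LinearIndependent.finrank_span_image_finset {R M ι : Type*} [DivisionRing R]
    [AddCommGroup M] [Module R M] {v : ι → M} (hv : LinearIndependent R v) (s : Finset ι) :
    Module.finrank R (Submodule.span R (v '' s)) = s.card := by
  rw [Set.image_eq_range]
  exact (finrank_span_eq_card (hv.comp _ Subtype.val_injective)).trans (by simp)

theorem limsup_le_of_eventually_le_of_tendsto {α : Type*} {l : Filter α} [l.NeBot]
    {f g : α → ℝ} {b c : ℝ} (hb : ∀ᶠ x in l, b ≤ f x) (hfg : f ≤ᶠ[l] g)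
    (hg : Tendsto g l (nhds c)) : limsup f l ≤ c :=
  hg.limsup_eq ▸ limsup_le_limsup hfg (isCoboundedUnder_le_of_eventually_le l hb)
    hg.isBoundedUnder_le

theorem AntitoneOn.sum_le_sum_of_le {ι : Type*} {φ : ℝ → ℝ} {c : ℝ}
    (hφ : AntitoneOn φ (Set.Ioi c)) {s : Finset ι} {a b : ι → ℝ}
    (ha : ∀ i ∈ s, c < a i) (hab : ∀ i ∈ s, a i ≤ b i) :
    ∑ i ∈ s, φ (b i) ≤ ∑ i ∈ s, φ (a i) :=
  sum_le_sum fun i hi => hφ (ha i hi) ((ha i hi).trans_le (hab i hi)) (hab i hi)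

section SortedEigenvalues

variable {n : ℕ} {A B : Matrix (Fin n) (Fin n) ℝ}

theorem sortedEigenvalues_of_isHermitian (hA : A.IsHermitian) (i : Fin n) :
    sortedEigenvalues A i = hA.eigenvalues (Tuple.sort hA.eigenvalues i) := by
  rw [sortedEigenvalues, dif_pos hA, Function.comp_apply]

theorem sortedEigenvalues_monotone (hA : A.IsHermitian) : Monotone (sortedEigenvalues A) := by
  simpa only [sortedEigenvalues, dif_pos hA] using Tuple.monotone_sort hA.eigenvalues

noncomputable def sortedEigenvectorBasis (hA : A.IsHermitian) :
    OrthonormalBasis (Fin n) ℝ (EuclideanSpace ℝ (Fin n)) :=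
  hA.eigenvectorBasis.reindex (Tuple.sort hA.eigenvalues).symm

theorem toEuclideanLin_sortedEigenvectorBasis (hA : A.IsHermitian) (i : Fin n) :
    toEuclideanLin A (sortedEigenvectorBasis hA i) =
      sortedEigenvalues A i • sortedEigenvectorBasis hA i := by
  simpa [sortedEigenvectorBasis, sortedEigenvalues_of_isHermitian hA, toLpLin_apply]
    using congrArg (WithLp.toLp 2) (hA.mulVec_eigenvectorBasis (Tuple.sort hA.eigenvalues i))

theorem inner_toEuclideanLin_self_eq_sum (hA : A.IsHermitian) (x : EuclideanSpace ℝ (Fin n)) :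
    ⟪x, toEuclideanLin A x⟫ =
      ∑ j, sortedEigenvalues A j * ⟪x, sortedEigenvectorBasis hA j⟫ ^ 2 := by
  rw [← (sortedEigenvectorBasis hA).sum_inner_mul_inner]
  refine sum_congr rfl fun j _ => ?_
  rw [← isSymmetric_toEuclideanLin_iff.2 hA, toEuclideanLin_sortedEigenvectorBasis,
    real_inner_smul_left, real_inner_comm]
  ring

theorem inner_toEuclideanLin_self_le_of_mem_span (hA : A.IsHermitian) {s : Set (Fin n)} {t : ℝ}
    (ht : ∀ j ∈ s, sortedEigenvalues A j ≤ t) {x : EuclideanSpace ℝ (Fin n)}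
    (hx : x ∈ Submodule.span ℝ (sortedEigenvectorBasis hA '' s)) :
    ⟪x, toEuclideanLin A x⟫ ≤ t * ‖x‖ ^ 2 := by
  rw [inner_toEuclideanLin_self_eq_sum hA, ← (sortedEigenvectorBasis hA).sum_sq_inner_left,
    mul_sum]
  refine sum_le_sum fun j _ => ?_
  by_cases hj : j ∈ s
  · exact mul_le_mul_of_nonneg_right (ht j hj) (sq_nonneg _)
  · simp [(sortedEigenvectorBasis hA).orthonormal.inner_eq_zero_of_mem_span_image hx hj]

theorem le_inner_toEuclideanLin_self_of_mem_span (hA : A.IsHermitian) {s : Set (Fin n)} {t : ℝ}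
    (ht : ∀ j ∈ s, t ≤ sortedEigenvalues A j) {x : EuclideanSpace ℝ (Fin n)}
    (hx : x ∈ Submodule.span ℝ (sortedEigenvectorBasis hA '' s)) :
    t * ‖x‖ ^ 2 ≤ ⟪x, toEuclideanLin A x⟫ := by
  rw [inner_toEuclideanLin_self_eq_sum hA, ← (sortedEigenvectorBasis hA).sum_sq_inner_left,
    mul_sum]
  refine sum_le_sum fun j _ => ?_
  by_cases hj : j ∈ s
  · exact mul_le_mul_of_nonneg_right (ht j hj) (sq_nonneg _)
  · simp [(sortedEigenvectorBasis hA).orthonormal.inner_eq_zero_of_mem_span_image hx hj]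

theorem finrank_span_sortedEigenvectorBasis (hA : A.IsHermitian) (s : Finset (Fin n)) :
    Module.finrank ℝ (Submodule.span ℝ (sortedEigenvectorBasis hA '' s)) = s.card :=
  (sortedEigenvectorBasis hA).orthonormal.linearIndependent.finrank_span_image_finset s

/-- Courant–Fischer: the span of the eigenvectors of `A` from index `i` on and that of the
eigenvectors of `B` up to index `i` have dimensions adding up to `n + 1`, so they meet. -/
theorem mul_sortedEigenvalues_le_of_mul_inner_le (hA : A.IsHermitian) (hB : B.IsHermitian)
    {c : ℝ} (hc : 0 ≤ c)
    (hAB : ∀ x, c * ⟪x, toEuclideanLin A x⟫ ≤ ⟪x, toEuclideanLin B x⟫) (i : Fin n) :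
    c * sortedEigenvalues A i ≤ sortedEigenvalues B i := by
  set W := Submodule.span ℝ (sortedEigenvectorBasis hA '' (Ici i : Finset (Fin n)))
  set W' := Submodule.span ℝ (sortedEigenvectorBasis hB '' (Iic i : Finset (Fin n)))
  obtain ⟨x, hxW, hxW', hx⟩ : ∃ x ∈ W, x ∈ W' ∧ x ≠ 0 := by
    by_contra! h
    have := Submodule.finrank_add_finrank_le_of_disjoint (Submodule.disjoint_def.2 h)
    rw [finrank_span_sortedEigenvectorBasis, finrank_span_sortedEigenvectorBasis,
      finrank_euclideanSpace_fin, Fin.card_Ici, Fin.card_Iic] at this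
    omega
  have hA_le : sortedEigenvalues A i * ‖x‖ ^ 2 ≤ ⟪x, toEuclideanLin A x⟫ :=
    le_inner_toEuclideanLin_self_of_mem_span hA
      (fun j hj => sortedEigenvalues_monotone hA (by simpa using hj)) hxW
  have hB_le : ⟪x, toEuclideanLin B x⟫ ≤ sortedEigenvalues B i * ‖x‖ ^ 2 :=
    inner_toEuclideanLin_self_le_of_mem_span hB
      (fun j hj => sortedEigenvalues_monotone hB (by simpa using hj)) hxW'
  refine le_of_mul_le_mul_right ?_ (by positivity : 0 < ‖x‖ ^ 2)
  calc c * sortedEigenvalues A i * ‖x‖ ^ 2 ≤ c * ⟪x, toEuclideanLin A x⟫ := by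
        rw [mul_assoc]; exact mul_le_mul_of_nonneg_left hA_le hc
    _ ≤ ⟪x, toEuclideanLin B x⟫ := hAB x
    _ ≤ sortedEigenvalues B i * ‖x‖ ^ 2 := hB_le

theorem inner_toEuclideanLin_add_smul (κ : ℝ) (x : EuclideanSpace ℝ (Fin n)) :
    ⟪x, toEuclideanLin (A + κ • B) x⟫ = ⟪x, toEuclideanLin A x⟫ + κ * ⟪x, toEuclideanLin B x⟫ := by
  simp [inner_add_right, real_inner_smul_right]

theorem sortedEigenvalues_le_sortedEigenvalues_add_smul (hA : A.IsHermitian) (hB : B.PosSemidef)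
    {κ : ℝ} (hκ : 0 ≤ κ) (i : Fin n) :
    sortedEigenvalues A i ≤ sortedEigenvalues (A + κ • B) i := by
  simpa using mul_sortedEigenvalues_le_of_mul_inner_le hA
    (hA.add (hB.isHermitian.smul (IsSelfAdjoint.all κ))) zero_le_one (fun x => by
      rw [one_mul, inner_toEuclideanLin_add_smul, le_add_iff_nonneg_right]
      exact mul_nonneg hκ ((isPositive_toEuclideanLin_iff.2 hB).inner_nonneg_right x)) i

theorem mul_sortedEigenvalues_le_sortedEigenvalues_add_smul (hA : A.PosSemidef)
    (hB : B.IsHermitian) {κ : ℝ} (hκ : 0 ≤ κ) (i : Fin n) :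
    κ * sortedEigenvalues B i ≤ sortedEigenvalues (A + κ • B) i :=
  mul_sortedEigenvalues_le_of_mul_inner_le hB
    (hA.isHermitian.add (hB.smul (IsSelfAdjoint.all κ))) hκ (fun x => by
      rw [inner_toEuclideanLin_add_smul, le_add_iff_nonneg_left]
      exact (isPositive_toEuclideanLin_iff.2 hA).inner_nonneg_right x) i

theorem card_filter_sortedEigenvalues_ne_zero (hA : A.IsHermitian) :
    #{i | sortedEigenvalues A i ≠ 0} = A.rank := by
  rw [hA.rank_eq_card_non_zero_eigs, Fintype.card_subtype]
  exact card_equiv (Tuple.sort hA.eigenvalues) (by simp [sortedEigenvalues_of_isHermitian hA])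

theorem sortedEigenvalues_nonneg (hA : A.PosSemidef) (i : Fin n) : 0 ≤ sortedEigenvalues A i := by
  rw [sortedEigenvalues_of_isHermitian hA.isHermitian]
  exact hA.eigenvalues_nonneg _

theorem sortedEigenvalues_pos (hA : A.PosSemidef) {i : Fin n} (hi : n ≤ i + A.rank) :
    0 < sortedEigenvalues A i := by
  refine (sortedEigenvalues_nonneg hA i).lt_of_ne' fun h => ?_
  have hsub : ({j | sortedEigenvalues A j ≠ 0} : Finset (Fin n)) ⊆ Ioi i := fun j hj => by
    simp only [mem_filter, mem_univ, true_and] at hj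
    refine mem_Ioi.2 (lt_of_not_ge fun hji => hj ?_)
    exact le_antisymm (h ▸ sortedEigenvalues_monotone hA.isHermitian hji)
      (sortedEigenvalues_nonneg hA j)
  have := card_le_card hsub
  rw [card_filter_sortedEigenvalues_ne_zero hA.isHermitian, Fin.card_Ioi] at this
  omega

end SortedEigenvalues

theorem IsConnLaplacian.le_rank_add_one {n : ℕ} {L : Matrix (Fin n) (Fin n) ℝ}
    (hL : IsConnLaplacian L) : n ≤ L.rank + 1 := by
  have hker : LinearMap.ker L.mulVecLin ≤ Submodule.span ℝ {fun _ => 1} := fun v hv => by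
    obtain ⟨c, rfl⟩ := hL.2.2 v hv
    exact Submodule.mem_span_singleton.2 ⟨c, by ext; simp⟩
  have h1 := (Submodule.finrank_mono hker).trans (finrank_span_le_card _)
  have h2 := LinearMap.finrank_range_add_finrank_ker L.mulVecLin
  simp only [Set.toFinset_singleton, card_singleton, Module.finrank_fin_fun] at h1 h2
  rw [Matrix.rank]
  omega

theorem limsup_performance_upper_bound_general {n k : ℕ}
    (L Lhat : Matrix (Fin n) (Fin n) ℝ)
    (hL : IsConnLaplacian L)
    (hLhat : Lhat.PosSemidef)
    (hrank : Lhat.rank = k)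
    (φ : ℝ → ℝ)
    (hanti : AntitoneOn φ (Set.Ioi 0))
    (hnonneg : ∀ x ∈ Set.Ioi (0 : ℝ), 0 ≤ φ x)
    (hlim : Tendsto φ atTop (nhds 0)) :
    limsup (fun κ : ℝ =>
        ∑ i ∈ Finset.univ.filter (fun i : Fin n => 1 ≤ (i : ℕ)),
          φ (sortedEigenvalues (L + κ • Lhat) i)) atTop ≤
      ∑ i ∈ Finset.univ.filter (fun i : Fin n => 1 ≤ (i : ℕ) ∧ (i : ℕ) + k < n),
        φ (sortedEigenvalues L i) := by
  set mid := univ.filter (fun i : Fin n => 1 ≤ (i : ℕ) ∧ (i : ℕ) + k < n)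
  set top := univ.filter (fun i : Fin n => 1 ≤ (i : ℕ) ∧ ¬ (i : ℕ) + k < n)
  have hsplit (u : Fin n → ℝ) :
      ∑ i ∈ univ.filter (fun i : Fin n => 1 ≤ (i : ℕ)), u i = ∑ i ∈ mid, u i + ∑ i ∈ top, u i := by
    rw [← sum_filter_add_sum_filter_not _ (fun i : Fin n => (i : ℕ) + k < n), filter_filter,
      filter_filter]
  have hL_pos (i : Fin n) (hi : 1 ≤ (i : ℕ)) : 0 < sortedEigenvalues L i :=
    sortedEigenvalues_pos hL.1 (by have := hL.le_rank_add_one; omega)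
  have hLhat_pos (i : Fin n) (hi : i ∈ top) : 0 < sortedEigenvalues Lhat i :=
    sortedEigenvalues_pos hLhat (by simp [top] at hi; omega)
  have hL_le (κ : ℝ) (hκ : 0 ≤ κ) (i : Fin n) :
      sortedEigenvalues L i ≤ sortedEigenvalues (L + κ • Lhat) i :=
    sortedEigenvalues_le_sortedEigenvalues_add_smul hL.1.isHermitian hLhat hκ i
  have hLhat_le (κ : ℝ) (hκ : 0 ≤ κ) (i : Fin n) :
      κ * sortedEigenvalues Lhat i ≤ sortedEigenvalues (L + κ • Lhat) i :=
    mul_sortedEigenvalues_le_sortedEigenvalues_add_smul hL.1 hLhat.isHermitian hκ i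
  have htop : Tendsto (fun κ => ∑ i ∈ top, φ (κ * sortedEigenvalues Lhat i)) atTop (nhds 0) := by
    simpa using tendsto_finsetSum top fun i hi =>
      hlim.comp (tendsto_id.atTop_mul_const (hLhat_pos i hi))
  refine limsup_le_of_eventually_le_of_tendsto (b := 0) ?_ ?_
    (by simpa using htop.const_add (∑ i ∈ mid, φ (sortedEigenvalues L i)))
  · filter_upwards [eventually_ge_atTop 0] with κ hκ
    exact sum_nonneg fun i hi =>
      hnonneg _ ((hL_pos i (by simpa using hi)).trans_le (hL_le κ hκ i))
  · filter_upwards [eventually_gt_atTop 0] with κ hκ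
    rw [hsplit]
    refine add_le_add ?_ ?_
    · exact hanti.sum_le_sum_of_le (fun i hi => hL_pos i (by simp [mid] at hi; omega))
        fun i _ => hL_le κ hκ.le i
    · exact hanti.sum_le_sum_of_le (fun i hi => mul_pos hκ (hLhat_pos i hi))
        fun i _ => hLhat_le κ hκ.le i

/-- Upper bound on the asymptotic performance obtained by adding a rank-`k` Laplacian
perturbation with ever larger weights. -/
theorem limsup_performance_upper_bound {n k : ℕ}
    (L Lhat : Matrix (Fin n) (Fin n) ℝ)
    (hL : IsConnLaplacian L) (hk1 : 1 ≤ k) (hk2 : k ≤ n - 2)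
    (hLhat : Lhat.PosSemidef) (hone : Lhat *ᵥ (fun _ => (1 : ℝ)) = 0)
    (hrank : Lhat.rank = k)
    (φ : ℝ → ℝ) (hcont : ContinuousOn φ (Set.Ioi 0))
    (hanti : AntitoneOn φ (Set.Ioi 0)) (hconv : ConvexOn ℝ (Set.Ioi 0) φ)
    (hnonneg : ∀ x ∈ Set.Ioi (0 : ℝ), 0 ≤ φ x)
    (hlim : Tendsto φ atTop (nhds 0)) :
    limsup (fun κ : ℝ =>
        ∑ i ∈ Finset.univ.filter (fun i : Fin n => 1 ≤ (i : ℕ)),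
          φ (sortedEigenvalues (L + κ • Lhat) i)) atTop ≤
      ∑ i ∈ Finset.univ.filter (fun i : Fin n => 1 ≤ (i : ℕ) ∧ (i : ℕ) + k < n),
        φ (sortedEigenvalues L i) :=
  limsup_performance_upper_bound_general L Lhat hL hLhat hrank φ hanti hnonneg hlim
end

section
/- Let L be the Laplacian of a connected weighted graph on n nodes, let e = {i,j} be a pair of distinct indices, and let w > 0. Then the spectral zeta function ζ₁ satisfies ζ₁(L + wL_e) = ζ₁(L) − r_e(L²)/(w⁻¹ + r_e(L)), where ζ₁(L) = tr(L^†) = Σ_{i=2}^n λ_i⁻¹. -/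
open Filter Finset Matrix

/-- The all-ones `n × n` matrix `J`. -/
def Jmat (n : ℕ) : Matrix (Fin n) (Fin n) ℝ := Matrix.of fun _ _ => (1 : ℝ)

/-- Moore–Penrose pseudoinverse of a connected-graph Laplacian:
`L^† = (L + (1/n) J)⁻¹ − (1/n) J`. -/
noncomputable def lapPinv {n : ℕ} (L : Matrix (Fin n) (Fin n) ℝ) : Matrix (Fin n) (Fin n) ℝ :=
  (L + (1 / (n : ℝ)) • Jmat n)⁻¹ - (1 / (n : ℝ)) • Jmat n

/-- The single-edge Laplacian `L_e = (δ_i − δ_j)(δ_i − δ_j)ᵀ`. -/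
def edgeLap {n : ℕ} (i j : Fin n) : Matrix (Fin n) (Fin n) ℝ :=
  Matrix.vecMulVec (Pi.single i 1 - Pi.single j 1) (Pi.single i 1 - Pi.single j 1)

/-- Effective resistance `r_e(L^m)` between nodes `i` and `j`, computed from `L^{†,m}`. -/
noncomputable def reff {n : ℕ} (L : Matrix (Fin n) (Fin n) ℝ) (m : ℕ) (i j : Fin n) : ℝ :=
  (lapPinv L ^ m) i i + (lapPinv L ^ m) j j - 2 * (lapPinv L ^ m) i j

/-!
Put `M = L + J/n`. On the all-ones kernel vector of `L` it acts as the identity, and on every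
other eigenvector (which is orthogonal to `𝟙`) it acts as `L`; hence `M` is invertible and
`L^† = M⁻¹ - J/n` maps each eigenvector of `L` with eigenvalue `λ` to `λ⁻¹` times itself
(`0⁻¹ = 0`). Summing `⟨b, L^† b⟩` over an orthonormal eigenbasis gives `tr L^† = ∑ λ⁻¹`.

Adding the edge adds the rank-one matrix `w u uᵀ`, `u = δ_i - δ_j`, to `M`, so the
Sherman–Morrison formula computes the new inverse. Since `u ⟂ 𝟙` we have `M⁻¹ u = L^† u`, so the
correction has trace `w uᵀ (L^†)² u / (1 + w uᵀ L^† u) = r_e(L²) / (w⁻¹ + r_e(L))`.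
-/

namespace Matrix
variable {ι K : Type*} [Fintype ι]

theorem inv_add_vecMulVec [DecidableEq ι] [Field K] {A : Matrix ι ι K} (hA : IsUnit A)
    (u v : ι → K) (h : 1 + v ⬝ᵥ A⁻¹ *ᵥ u ≠ 0) :
    (A + vecMulVec u v)⁻¹ = A⁻¹ - (1 + v ⬝ᵥ A⁻¹ *ᵥ u)⁻¹ • (A⁻¹ * vecMulVec u v * A⁻¹) := by
  set s := 1 + v ⬝ᵥ A⁻¹ *ᵥ u
  have hAA : A * A⁻¹ = 1 := mul_nonsing_inv A ((isUnit_iff_isUnit_det A).mp hA)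
  have hsq : vecMulVec u v * A⁻¹ * vecMulVec u v = (s - 1) • vecMulVec u v := by
    rw [vecMulVec_mul, vecMulVec_mul_vecMulVec, vecMulVec_smul, ← dotProduct_mulVec]
    simp [s]
  apply inv_eq_right_inv
  calc (A + vecMulVec u v) * (A⁻¹ - s⁻¹ • (A⁻¹ * vecMulVec u v * A⁻¹))
      = 1 + (1 - s⁻¹ - s⁻¹ * (s - 1)) • (vecMulVec u v * A⁻¹) := by
        simp only [add_mul, mul_sub, mul_smul_comm, ← mul_assoc, hAA, one_mul, hsq,
          smul_mul_assoc]
        module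
    _ = 1 := by rw [show 1 - s⁻¹ - s⁻¹ * (s - 1) = 0 by field_simp; ring, zero_smul, add_zero]

theorem IsSymm.dotProduct_mulVec_comm [CommSemiring K] {A : Matrix ι ι K} (hA : A.IsSymm)
    (x y : ι → K) : x ⬝ᵥ A *ᵥ y = A *ᵥ x ⬝ᵥ y := by
  rw [dotProduct_mulVec, ← vecMul_transpose, hA.eq]

theorem IsSymm.single_sub_single_dotProduct_mulVec [DecidableEq ι] [CommRing K] {A : Matrix ι ι K}
    (hA : A.IsSymm) (i j : ι) :
    (Pi.single i 1 - Pi.single j 1) ⬝ᵥ A *ᵥ (Pi.single i 1 - Pi.single j 1) =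
      A i i + A j j - 2 * A i j := by
  simp only [sub_dotProduct, dotProduct_sub, single_one_dotProduct, mulVec_sub, mulVec_single_one,
    col_apply, hA.apply i j]
  ring

theorem trace_eq_sum_dotProduct_mulVec_orthonormalBasis [DecidableEq ι] (A : Matrix ι ι ℝ)
    (b : OrthonormalBasis ι ℝ (EuclideanSpace ℝ ι)) :
    A.trace = ∑ l, (b l).ofLp ⬝ᵥ A *ᵥ (b l).ofLp := by
  have h := LinearMap.trace_eq_sum_inner (toEuclideanLin A) b
  rw [toEuclideanLin_eq_toLin_orthonormal,
    LinearMap.trace_eq_matrix_trace _ (EuclideanSpace.basisFun ι ℝ).toBasis,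
    LinearMap.toMatrix_toLin] at h
  rw [h]
  refine Finset.sum_congr rfl fun l _ => ?_
  simp [← toEuclideanLin_eq_toLin_orthonormal, PiLp.inner_apply, dotProduct, mul_comm]

theorem inv_mulVec_eq_inv_smul [DecidableEq ι] [Field K] {A : Matrix ι ι K} (hA : IsUnit A)
    {v : ι → K} {c : K} (hc : c ≠ 0) (hv : A *ᵥ v = c • v) : A⁻¹ *ᵥ v = c⁻¹ • v := by
  have h : A⁻¹ *ᵥ (A *ᵥ v) = v := by
    rw [mulVec_mulVec, nonsing_inv_mul A ((isUnit_iff_isUnit_det A).mp hA), one_mulVec]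
  rw [hv, mulVec_smul] at h
  calc A⁻¹ *ᵥ v = c⁻¹ • c • A⁻¹ *ᵥ v := by rw [smul_smul, inv_mul_cancel₀ hc, one_smul]
    _ = c⁻¹ • v := by rw [h]

end Matrix

variable {n : ℕ}

theorem Jmat_mulVec (v : Fin n → ℝ) : Jmat n *ᵥ v = fun _ => ∑ k, v k := by
  ext
  simp [Jmat, mulVec, dotProduct]

theorem Jmat_mulVec_of_sum_eq_zero {v : Fin n → ℝ} (hv : ∑ k, v k = 0) : Jmat n *ᵥ v = 0 := by
  simp [Jmat_mulVec, hv, Pi.zero_def]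

theorem Jmat_isSymm : (Jmat n).IsSymm := by
  ext
  rfl

noncomputable def lapShift (L : Matrix (Fin n) (Fin n) ℝ) : Matrix (Fin n) (Fin n) ℝ :=
  L + (1 / (n : ℝ)) • Jmat n

theorem lapPinv_eq_inv_lapShift_sub (L : Matrix (Fin n) (Fin n) ℝ) :
    lapPinv L = (lapShift L)⁻¹ - (1 / (n : ℝ)) • Jmat n :=
  rfl

theorem lapShift_mulVec_of_sum_eq_zero (L : Matrix (Fin n) (Fin n) ℝ) {v : Fin n → ℝ}
    (hv : ∑ k, v k = 0) : lapShift L *ᵥ v = L *ᵥ v := by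
  simp [lapShift, add_mulVec, smul_mulVec, Jmat_mulVec_of_sum_eq_zero hv]

theorem lapPinv_mulVec_of_sum_eq_zero (L : Matrix (Fin n) (Fin n) ℝ) {v : Fin n → ℝ}
    (hv : ∑ k, v k = 0) : lapPinv L *ᵥ v = (lapShift L)⁻¹ *ᵥ v := by
  simp [lapPinv_eq_inv_lapShift_sub, sub_mulVec, smul_mulVec, Jmat_mulVec_of_sum_eq_zero hv]

theorem lapShift_add_smul_edgeLap (L : Matrix (Fin n) (Fin n) ℝ) (w : ℝ) (i j : Fin n) :
    lapShift (L + w • edgeLap i j) =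
      lapShift L +
        vecMulVec (w • (Pi.single i 1 - Pi.single j 1)) (Pi.single i 1 - Pi.single j 1) := by
  rw [lapShift, lapShift, edgeLap, smul_vecMulVec, add_right_comm]

namespace IsConnLaplacian

variable {L : Matrix (Fin n) (Fin n) ℝ} (hL : IsConnLaplacian L)
include hL

theorem posSemidef : L.PosSemidef := hL.1

theorem isHermitian : L.IsHermitian := hL.1.1

theorem mulVec_one : L *ᵥ (fun _ => 1) = 0 := hL.2.1

theorem eq_const_of_mulVec_eq_zero {v : Fin n → ℝ} (hv : L *ᵥ v = 0) : ∃ c : ℝ, v = fun _ => c :=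
  hL.2.2 v hv

theorem isSymm : L.IsSymm := by
  simpa [IsHermitian, IsSymm] using hL.isHermitian

theorem sum_eq_zero_of_mulVec_eq_smul {μ : ℝ} {v : Fin n → ℝ} (hμ : μ ≠ 0)
    (hv : L *ᵥ v = μ • v) : ∑ k, v k = 0 := by
  have h : (fun _ => 1) ⬝ᵥ L *ᵥ v = 0 := by
    rw [hL.isSymm.dotProduct_mulVec_comm, hL.mulVec_one, zero_dotProduct]
  simpa [hv, dotProduct, ← Finset.mul_sum, hμ] using h

theorem lapShift_mulVec_of_mulVec_eq_zero {v : Fin n → ℝ} (hv : L *ᵥ v = 0) :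
    lapShift L *ᵥ v = v := by
  obtain ⟨c, rfl⟩ := hL.eq_const_of_mulVec_eq_zero hv
  ext k
  have hn : (n : ℝ) ≠ 0 := Nat.cast_ne_zero.mpr k.pos.ne'
  simp [lapShift, add_mulVec, hv, smul_mulVec, Jmat_mulVec]
  field_simp

theorem isSymm_lapShift : (lapShift L).IsSymm :=
  hL.isSymm.add (Jmat_isSymm.smul _)

theorem isUnit_lapShift : IsUnit (lapShift L) := by
  have hker : ∀ v, lapShift L *ᵥ v = 0 → v = 0 := by
    intro v hv
    have hsum : ∑ k, v k = 0 := by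
      have h := hL.isSymm_lapShift.dotProduct_mulVec_comm (fun _ => 1) v
      rw [hv, dotProduct_zero, hL.lapShift_mulVec_of_mulVec_eq_zero hL.mulVec_one] at h
      simpa [dotProduct] using h.symm
    rw [lapShift_mulVec_of_sum_eq_zero L hsum] at hv
    obtain ⟨c, rfl⟩ := hL.eq_const_of_mulVec_eq_zero hv
    ext k
    have hn : (n : ℝ) ≠ 0 := Nat.cast_ne_zero.mpr k.pos.ne'
    simpa [hn] using hsum
  rw [← mulVec_injective_iff_isUnit]
  intro x y hxy
  rw [← sub_eq_zero, ← mulVec_sub] at hxy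
  exact sub_eq_zero.mp (hker _ hxy)

/-- With `0⁻¹ = 0` this also covers the kernel direction, which `L^†` annihilates. -/
theorem lapPinv_mulVec_of_mulVec_eq_smul {μ : ℝ} {v : Fin n → ℝ} (hv : L *ᵥ v = μ • v) :
    lapPinv L *ᵥ v = μ⁻¹ • v := by
  by_cases hμ : μ = 0
  · rw [hμ, zero_smul] at hv
    have hMv := hL.lapShift_mulVec_of_mulVec_eq_zero hv
    have hJv : ((1 / (n : ℝ)) • Jmat n) *ᵥ v = v := by
      rwa [lapShift, add_mulVec, hv, zero_add] at hMv
    have hMv' : (lapShift L)⁻¹ *ᵥ v = v := by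
      simpa using inv_mulVec_eq_inv_smul hL.isUnit_lapShift one_ne_zero (by simpa using hMv)
    rw [lapPinv_eq_inv_lapShift_sub, sub_mulVec, hMv', hJv, hμ, sub_self, _root_.inv_zero,
      zero_smul]
  · have hsum := hL.sum_eq_zero_of_mulVec_eq_smul hμ hv
    rw [lapPinv_mulVec_of_sum_eq_zero L hsum]
    exact inv_mulVec_eq_inv_smul hL.isUnit_lapShift hμ
      ((lapShift_mulVec_of_sum_eq_zero L hsum).trans hv)

theorem trace_lapPinv_eq_sum_inv_eigenvalues :
    (lapPinv L).trace = ∑ l, (hL.isHermitian.eigenvalues l)⁻¹ := by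
  rw [trace_eq_sum_dotProduct_mulVec_orthonormalBasis _ hL.isHermitian.eigenvectorBasis]
  refine Finset.sum_congr rfl fun l _ => ?_
  have hb := hL.isHermitian.eigenvectorBasis.inner_eq_one l
  rw [EuclideanSpace.inner_eq_star_dotProduct, star_trivial] at hb
  rw [hL.lapPinv_mulVec_of_mulVec_eq_smul (hL.isHermitian.mulVec_eigenvectorBasis l),
    dotProduct_smul, hb, smul_eq_mul, mul_one]

theorem exists_eigenvalues_eq_zero [NeZero n] : ∃ l, hL.isHermitian.eigenvalues l = 0 := by
  have hdet : L.det = 0 :=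
    exists_mulVec_eq_zero_iff.mp ⟨fun _ => 1, fun h => by simpa using congrFun h 0, hL.mulVec_one⟩
  rw [hL.isHermitian.det_eq_prod_eigenvalues] at hdet
  simpa using Finset.prod_eq_zero_iff.mp hdet

theorem sortedEigenvalues_eq_zero {l : Fin n} (hl : (l : ℕ) = 0) : sortedEigenvalues L l = 0 := by
  have : NeZero n := ⟨l.pos.ne'⟩
  obtain ⟨l₀, hl₀⟩ := hL.exists_eigenvalues_eq_zero
  set σ := Tuple.sort hL.isHermitian.eigenvalues
  rw [sortedEigenvalues, dif_pos hL.isHermitian]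
  refine le_antisymm ?_ (hL.posSemidef.eigenvalues_nonneg _)
  calc (hL.isHermitian.eigenvalues ∘ σ) l ≤ (hL.isHermitian.eigenvalues ∘ σ) (σ.symm l₀) :=
        Tuple.monotone_sort _ (by simp [Fin.le_def, hl])
    _ = 0 := by simp [hl₀]

theorem trace_lapPinv_eq_sum_inv_sortedEigenvalues :
    (lapPinv L).trace =
      ∑ l ∈ Finset.univ.filter (fun l : Fin n => 1 ≤ (l : ℕ)), (sortedEigenvalues L l)⁻¹ := by
  rw [Finset.sum_filter_of_ne, hL.trace_lapPinv_eq_sum_inv_eigenvalues, sortedEigenvalues,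
    dif_pos hL.isHermitian]
  · exact (Equiv.sum_comp (Tuple.sort _) _).symm
  · intro l _ hl
    by_contra h
    exact hl (by rw [hL.sortedEigenvalues_eq_zero (by omega), _root_.inv_zero])

theorem isSymm_lapPinv : (lapPinv L).IsSymm :=
  hL.isSymm_lapShift.inv.sub (Jmat_isSymm.smul _)

theorem reff_eq_dotProduct_mulVec (m : ℕ) (i j : Fin n) :
    reff L m i j = (Pi.single i 1 - Pi.single j 1) ⬝ᵥ
      (lapPinv L ^ m) *ᵥ (Pi.single i 1 - Pi.single j 1) :=
  ((hL.isSymm_lapPinv.pow m).single_sub_single_dotProduct_mulVec i j).symm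

theorem posSemidef_lapShift : (lapShift L).PosSemidef := by
  have hJ : Jmat n = vecMulVec (fun _ => 1) (star fun _ => 1) := by
    ext
    simp [Jmat, vecMulVec_apply]
  rw [lapShift, hJ]
  exact hL.posSemidef.add ((posSemidef_vecMulVec_self_star _).smul (by positivity))

theorem trace_lapPinv_add_smul_edgeLap {w : ℝ} (hw : 0 < w) (i j : Fin n) :
    (lapPinv (L + w • edgeLap i j)).trace =
      (lapPinv L).trace - reff L 2 i j / (w⁻¹ + reff L 1 i j) := by
  set u : Fin n → ℝ := Pi.single i 1 - Pi.single j 1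
  set M := lapShift L
  have hPu : lapPinv L *ᵥ u = M⁻¹ *ᵥ u := lapPinv_mulVec_of_sum_eq_zero L (by simp [u])
  have hr₁ : u ⬝ᵥ M⁻¹ *ᵥ u = reff L 1 i j := by
    rw [hL.reff_eq_dotProduct_mulVec, pow_one, hPu]
  have hr₂ : u ⬝ᵥ (M⁻¹ * M⁻¹) *ᵥ u = reff L 2 i j := by
    rw [hL.reff_eq_dotProduct_mulVec, pow_two, ← mulVec_mulVec, ← mulVec_mulVec, hPu,
      hL.isSymm_lapPinv.dotProduct_mulVec_comm, hPu, hL.isSymm_lapShift.inv.dotProduct_mulVec_comm]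
  have hr₁_nonneg : 0 ≤ reff L 1 i j := by
    rw [← hr₁]
    simpa using hL.posSemidef_lapShift.inv.dotProduct_mulVec_nonneg u
  have hden : 1 + u ⬝ᵥ M⁻¹ *ᵥ (w • u) = 1 + w * reff L 1 i j := by
    rw [mulVec_smul, dotProduct_smul, hr₁, smul_eq_mul]
  have htr : (M⁻¹ * vecMulVec (w • u) u * M⁻¹).trace = w * reff L 2 i j := by
    rw [trace_mul_cycle, mul_vecMulVec, trace_vecMulVec, mulVec_smul, smul_dotProduct,
      dotProduct_comm, hr₂, smul_eq_mul]
  rw [lapPinv_eq_inv_lapShift_sub, lapShift_add_smul_edgeLap,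
    inv_add_vecMulVec hL.isUnit_lapShift _ _ (by rw [hden]; positivity), hden, trace_sub,
    trace_sub, trace_smul, htr, lapPinv_eq_inv_lapShift_sub, trace_sub, smul_eq_mul]
  field_simp
  ring

end IsConnLaplacian

theorem zeta_one_rank_one_update_general {n : ℕ}
    (L : Matrix (Fin n) (Fin n) ℝ) (hL : IsConnLaplacian L)
    (i j : Fin n) (w : ℝ) (hw : 0 < w) :
    (lapPinv L).trace =
        ∑ l ∈ Finset.univ.filter (fun l : Fin n => 1 ≤ (l : ℕ)),
          (sortedEigenvalues L l)⁻¹ ∧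
      (lapPinv (L + w • edgeLap i j)).trace =
        (lapPinv L).trace - reff L 2 i j / (w⁻¹ + reff L 1 i j) :=
  ⟨hL.trace_lapPinv_eq_sum_inv_sortedEigenvalues, hL.trace_lapPinv_add_smul_edgeLap hw i j⟩

/-- Exact update of the spectral zeta function ζ₁(L) = tr(L^†) under addition of a
weighted edge, together with its spectral expression. -/
theorem zeta_one_rank_one_update {n : ℕ}
    (L : Matrix (Fin n) (Fin n) ℝ) (hL : IsConnLaplacian L)
    (i j : Fin n) (hij : i ≠ j) (w : ℝ) (hw : 0 < w) :
    (lapPinv L).trace =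
        ∑ l ∈ Finset.univ.filter (fun l : Fin n => 1 ≤ (l : ℕ)),
          (sortedEigenvalues L l)⁻¹ ∧
      (lapPinv (L + w • edgeLap i j)).trace =
        (lapPinv L).trace - reff L 2 i j / (w⁻¹ + reff L 1 i j) :=
  zeta_one_rank_one_update_general L hL i j w hw
end
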